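/- Let 0 ≤ α < mn, a = 2^{m(n+1)}, and let f₁,…,f_m be locally integrable. For k ∈ ℤ let Ω_k = {x : M_α^d(f⃗)(x) > a^k}, where M_α^d is the dyadic multilinear fractional maximal operator, and write Ω_k = ∪_j Q_j^k as a union of maximal dyadic cubes. Then the family {Q_j^k} is sparse, i.e., |Ω_{k+1} ∩ Q_j^k| ≤ (1/2)|Q_j^k| for all j, k. -/

import Mathlib

open MeasureTheory ENNReal NNReal Set

noncomputable section

/-- Euclidean space `ℝⁿ`. -/
abbrev En (n : ℕ) := EuclideanSpace ℝ (Fin n)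

/-- The axis-parallel half-open cube with lower corner `a` and side length `h`. -/
def Cube (n : ℕ) (a : Fin n → ℝ) (h : ℝ) : Set (En n) :=
  {x | ∀ i, a i ≤ x i ∧ x i < a i + h}

/-- Conjugate exponent `p' = p/(p-1)`. -/
def rconj (p : ℝ) : ℝ := p / (p - 1)

/-- Multilinear fractional maximal operator `M_α`. -/
def MFrac (m n : ℕ) (α : ℝ) (f : Fin m → En n → ℝ) (x : En n) : ℝ≥0∞ :=
  ⨆ (a : Fin n → ℝ) (h : ℝ) (_ : 0 < h) (_ : x ∈ Cube n a h),
    ∏ i, (volume (Cube n a h)) ^ (α / (m * n : ℝ) - 1) *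
      ∫⁻ y in Cube n a h, (‖f i y‖₊ : ℝ≥0∞)

/-- Cube of the translated dyadic grid `D_β`. -/
def GridCube (n : ℕ) (β : Fin n → ℝ) (k : ℤ) (j : Fin n → ℤ) : Set (En n) :=
  Cube n (fun i => (2:ℝ) ^ (-k) * ((j i : ℝ) + (-1 : ℝ) ^ k * β i)) ((2:ℝ) ^ (-k))

/-- Multilinear fractional maximal operator restricted to the grid `D_β`. -/
def MFracGrid (m n : ℕ) (α : ℝ) (β : Fin n → ℝ) (f : Fin m → En n → ℝ) (x : En n) : ℝ≥0∞ :=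
  ⨆ (k : ℤ) (j : Fin n → ℤ) (_ : x ∈ GridCube n β k j),
    ∏ i, (volume (GridCube n β k j)) ^ (α / (m * n : ℝ) - 1) *
      ∫⁻ y in GridCube n β k j, (‖f i y‖₊ : ℝ≥0∞)

/-- The multiple weight constant `[ω]_{A_{(P,q)}}` (all `p i > 1`). -/
def Apq (m n : ℕ) (p : Fin m → ℝ) (q : ℝ) (ω : Fin m → En n → ℝ≥0∞) : ℝ≥0∞ :=
  ⨆ (a : Fin n → ℝ) (h : ℝ) (_ : 0 < h),
    ((volume (Cube n a h))⁻¹ * ∫⁻ x in Cube n a h, (∏ i, ω i x) ^ q) *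
      ∏ i, ((volume (Cube n a h))⁻¹ *
        ∫⁻ x in Cube n a h, ω i x ^ (-(rconj (p i)))) ^ (q / rconj (p i))

/-- Hardy–Littlewood maximal operator (over cubes). -/
def HLMax (n : ℕ) (g : En n → ℝ≥0∞) (x : En n) : ℝ≥0∞ :=
  ⨆ (a : Fin n → ℝ) (h : ℝ) (_ : 0 < h) (_ : x ∈ Cube n a h),
    (volume (Cube n a h))⁻¹ * ∫⁻ y in Cube n a h, g y

/-- The Fujii–Wilson `A_∞` constant. -/
def AInfty (n : ℕ) (w : En n → ℝ≥0∞) : ℝ≥0∞ :=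
  ⨆ (a : Fin n → ℝ) (h : ℝ) (_ : 0 < h),
    (∫⁻ x in Cube n a h, w x)⁻¹ *
      ∫⁻ x in Cube n a h, HLMax n ((Cube n a h).indicator w) x

/-- Weighted `L^p` "norm" `(∫ F^p w)^{1/p}` for `ℝ≥0∞`-valued `F`. -/
def wnorm (n : ℕ) (p : ℝ) (w : En n → ℝ≥0∞) (F : En n → ℝ≥0∞) : ℝ≥0∞ :=
  (∫⁻ x, F x ^ p * w x) ^ (1 / p)

/-- Multilinear fractional maximal operator with rough homogeneous kernel `Ω`. -/
def MOmega (m n : ℕ) (α : ℝ) (Ω : (Fin m → En n) → ℝ) (f : Fin m → En n → ℝ)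
    (x : En n) : ℝ≥0∞ :=
  ⨆ (a : Fin n → ℝ) (h : ℝ) (_ : 0 < h) (_ : x ∈ Cube n a h),
    (volume (Cube n a h)) ^ (α / (n : ℝ) - m) *
      ∫⁻ y in univ.pi (fun _ : Fin m => Cube n a h),
        (‖Ω (fun i => x - y i)‖₊ : ℝ≥0∞) * ∏ i, (‖f i (y i)‖₊ : ℝ≥0∞)

/-- The `L^s((S^{n-1})^m)` norm of a (degree-zero homogeneous) kernel, realized through the
cone measure on the product of unit spheres. -/
def sphereNorm (m n : ℕ) (s : ℝ) (Ω : (Fin m → En n) → ℝ) : ℝ≥0∞ :=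
  eLpNorm Ω (ENNReal.ofReal s)
    (Measure.map (fun (y : Fin m → En n) (i : Fin m) => ‖y i‖⁻¹ • y i)
      (((n : ℝ≥0∞) ^ m) • volume.restrict (univ.pi fun _ : Fin m => Metric.ball (0 : En n) 1)))

/-- Euclidean norm of `(y₁, …, y_m) ∈ (ℝⁿ)^m`. -/
def bigNorm (m n : ℕ) (y : Fin m → En n) : ℝ := Real.sqrt (∑ i, ‖y i‖ ^ 2)

/-- Multilinear fractional integral with rough homogeneous kernel (absolute values). -/
def IOmega (m n : ℕ) (α : ℝ) (Ω : (Fin m → En n) → ℝ) (f : Fin m → En n → ℝ)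
    (x : En n) : ℝ≥0∞ :=
  ∫⁻ y : Fin m → En n,
    ENNReal.ofReal (bigNorm m n y ^ (α - (m * n : ℝ))) * (‖Ω y‖₊ : ℝ≥0∞) *
      ∏ i, (‖f i (x - y i)‖₊ : ℝ≥0∞)

/-- Standard dyadic cube `2^{-k}([0,1)^n + j)`. -/
def DyadicCube (n : ℕ) (k : ℤ) (j : Fin n → ℤ) : Set (En n) :=
  Cube n (fun i => (j i : ℝ) * (2:ℝ) ^ (-k)) ((2:ℝ) ^ (-k))

def IsDyadic (n : ℕ) (S : Set (En n)) : Prop := ∃ k j, S = DyadicCube n k j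

/-- The product of fractional averages `∏_i |S|^{α/(mn)-1} ∫_S |f_i|`. -/
def dyadAvg (m n : ℕ) (α : ℝ) (f : Fin m → En n → ℝ) (S : Set (En n)) : ℝ≥0∞ :=
  ∏ i, (volume S) ^ (α / (m * n : ℝ) - 1) * ∫⁻ y in S, (‖f i y‖₊ : ℝ≥0∞)

/-- Dyadic multilinear fractional maximal operator `M_α^d`. -/
def MFracDyadic (m n : ℕ) (α : ℝ) (f : Fin m → En n → ℝ) (x : En n) : ℝ≥0∞ :=
  ⨆ (k : ℤ) (j : Fin n → ℤ) (_ : x ∈ DyadicCube n k j), dyadAvg m n α f (DyadicCube n k j)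

/-- A maximal (Calderón–Zygmund) dyadic cube of the level set at height `t`. -/
def IsCZCube (m n : ℕ) (α : ℝ) (f : Fin m → En n → ℝ) (t : ℝ≥0∞) (S : Set (En n)) : Prop :=
  IsDyadic n S ∧ t < dyadAvg m n α f S ∧
    ∀ S', IsDyadic n S' → S ⊂ S' → ¬ t < dyadAvg m n α f S'

/-- The multiple weight constant `[ω]_{A_{P}}` of Lerner–Ombrosi–Pérez–Torres–Trujillo. -/
def ApVec (m n : ℕ) (p : Fin m → ℝ) (pp : ℝ) (ω : Fin m → En n → ℝ≥0∞) : ℝ≥0∞ :=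
  ⨆ (a : Fin n → ℝ) (h : ℝ) (_ : 0 < h),
    (∏ i, ((volume (Cube n a h))⁻¹ *
        ∫⁻ x in Cube n a h, ω i x ^ (1 - rconj (p i))) ^ (pp / rconj (p i))) *
      ((volume (Cube n a h))⁻¹ * ∫⁻ x in Cube n a h, ∏ i, ω i x ^ (pp / p i))

/-- `X`-average `‖g‖_{X,Q} = ‖τ_{ℓ(Q)}(g χ_Q)‖_X` of `g` over the cube `Q = Q(a,h)`,
for an abstract Banach-function-space norm functional `N`. -/
def Xavg (n : ℕ) (N : (En n → ℝ≥0∞) → ℝ≥0∞) (a : Fin n → ℝ) (h : ℝ)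
    (g : En n → ℝ≥0∞) : ℝ≥0∞ :=
  N (fun x => (Cube n a h).indicator g (h • x))

/-- Maximal operator `M_X` associated with the norm functional `N`. -/
def MX (n : ℕ) (N : (En n → ℝ≥0∞) → ℝ≥0∞) (g : En n → ℝ≥0∞) (x : En n) : ℝ≥0∞ :=
  ⨆ (a : Fin n → ℝ) (h : ℝ) (_ : 0 < h) (_ : x ∈ Cube n a h), Xavg n N a h g

/-- Weighted fractional maximal operator `M_{σ,α/m}`. -/
def MWFrac (n m : ℕ) (α : ℝ) (σ : En n → ℝ≥0∞) (f : En n → ℝ) (x : En n) : ℝ≥0∞ :=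
  ⨆ (a : Fin n → ℝ) (h : ℝ) (_ : 0 < h) (_ : x ∈ Cube n a h),
    (∫⁻ y in Cube n a h, σ y) ^ (α / (m * n : ℝ) - 1) *
      ∫⁻ y in Cube n a h, (‖f y‖₊ : ℝ≥0∞) * σ y

/-- The reverse Hölder exponent `r(w) = 1 + 1/(c_n [w]_{A_∞})`. -/
def rExp (n : ℕ) (A : ℝ) : ℝ := 1 + 1 / ((2:ℝ) ^ (11 + n) * A)

end

/-!
Every point of `Ω_{k+1} ∩ Q` lies in a maximal dyadic cube `P ⊆ Q` whose average exceeds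
`a^{k+1}`: a dyadic cube meeting `Q` but not inside it contains `Q`, so its average is at most
`a^k`. These cubes are disjoint and satisfy `a^{k+1} |P|^m ≤ |Q|^{α/n} ∏ᵢ ∫_P |fᵢ|`; summing over
`P` with Hölder's inequality for the exponents `1/m, …, 1/m` gives
`a^{k+1} |Ω_{k+1} ∩ Q|^m ≤ |Q|^{α/n} ∏ᵢ ∫_Q |fᵢ| = |Q|^m avg(Q)`. Comparing `Q` with its parent,
which is not selected, gives `avg(Q) ≤ 2^{mn} a^k`, and since `a = 2^{mn} 2^m` this leaves
`|Ω_{k+1} ∩ Q| ≤ |Q| / 2`.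
-/

section Cube

variable {n : ℕ}

lemma cube_eq_preimage (a : Fin n → ℝ) (h : ℝ) :
    Cube n a h = (MeasurableEquiv.toLp 2 (Fin n → ℝ)).symm ⁻¹'
      univ.pi fun i => Ico (a i) (a i + h) := by
  ext x
  simp only [mem_preimage, mem_univ_pi, mem_Ico]
  rfl

lemma measurableSet_cube (a : Fin n → ℝ) (h : ℝ) : MeasurableSet (Cube n a h) := by
  rw [cube_eq_preimage]
  exact (MeasurableEquiv.toLp 2 (Fin n → ℝ)).symm.measurable
    (MeasurableSet.univ_pi fun _ => measurableSet_Ico)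

lemma volume_cube (a : Fin n → ℝ) (h : ℝ) :
    volume (Cube n a h) = ENNReal.ofReal h ^ n := by
  rw [cube_eq_preimage,
    (EuclideanSpace.volume_preserving_symm_measurableEquiv_toLp (Fin n)).measure_preimage
      (MeasurableSet.univ_pi fun _ => measurableSet_Ico).nullMeasurableSet,
    volume_pi_pi]
  simp [Real.volume_Ico]

end Cube

section Dyadic

variable {n : ℕ} {k k' : ℤ} {j j' : Fin n → ℤ} {x : En n}

lemma mem_dyadicCube_iff : x ∈ DyadicCube n k j ↔ ∀ i, ⌊x i * 2 ^ k⌋ = j i := by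
  have h2 : (0 : ℝ) < 2 ^ k := zpow_pos two_pos k
  refine forall_congr' fun i => ?_
  rw [Int.floor_eq_iff, ← div_le_iff₀ h2, ← lt_div_iff₀ h2, div_eq_mul_inv, div_eq_mul_inv,
    ← zpow_neg, add_one_mul]

lemma floor_mul_zpow_of_mem_dyadicCube (hk : k' ≤ k) (hx : x ∈ DyadicCube n k j) (i : Fin n) :
    ⌊x i * 2 ^ k'⌋ = j i / 2 ^ (k - k').toNat := by
  have hscale : x i * 2 ^ k' = x i * 2 ^ k / ((2 ^ (k - k').toNat : ℕ) : ℝ) := by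
    rw [Nat.cast_pow, Nat.cast_ofNat, ← zpow_natCast, Int.toNat_of_nonneg (sub_nonneg.2 hk),
      mul_div_assoc, ← zpow_sub₀ two_ne_zero, _root_.sub_sub_cancel]
  rw [hscale, Int.floor_div_natCast, mem_dyadicCube_iff.1 hx i]
  push_cast
  rfl

lemma dyadicCube_subset_of_le (hk : k' ≤ k) (hx : x ∈ DyadicCube n k j)
    (hx' : x ∈ DyadicCube n k' j') : DyadicCube n k j ⊆ DyadicCube n k' j' := fun y hy =>
  mem_dyadicCube_iff.2 fun i => by
    rw [floor_mul_zpow_of_mem_dyadicCube hk hy, ← floor_mul_zpow_of_mem_dyadicCube hk hx,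
      mem_dyadicCube_iff.1 hx' i]

lemma dyadicCube_subset_parent : DyadicCube n k j ⊆ DyadicCube n (k - 1) fun i => j i / 2 :=
  fun y hy => mem_dyadicCube_iff.2 fun i => by
    simpa using floor_mul_zpow_of_mem_dyadicCube (sub_one_lt k).le hy i

lemma volume_dyadicCube : volume (DyadicCube n k j) = ENNReal.ofReal (2 ^ (-k)) ^ n :=
  volume_cube _ _

lemma volume_dyadicCube_ne_zero : volume (DyadicCube n k j) ≠ 0 := by
  rw [volume_dyadicCube]
  exact pow_ne_zero _ (ENNReal.ofReal_pos.2 (by positivity)).ne'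

lemma volume_dyadicCube_ne_top : volume (DyadicCube n k j) ≠ ⊤ := by
  rw [volume_dyadicCube]
  exact pow_ne_top ENNReal.ofReal_ne_top

lemma volume_dyadicCube_parent :
    volume (DyadicCube n (k - 1) fun i => j i / 2) = 2 ^ n * volume (DyadicCube n k j) := by
  rw [volume_dyadicCube, volume_dyadicCube, ← mul_pow, neg_sub, zpow_sub₀ two_ne_zero,
    zpow_one, div_eq_mul_inv, ← zpow_neg, ENNReal.ofReal_mul (by positivity)]
  simp

lemma le_of_dyadicCube_subset (hn : 0 < n) (h : DyadicCube n k j ⊆ DyadicCube n k' j') :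
    k' ≤ k := by
  have hvol := measure_mono (μ := volume) h
  rw [volume_dyadicCube, volume_dyadicCube, ENNReal.pow_le_pow_left_iff hn.ne',
    ENNReal.ofReal_le_ofReal_iff (by positivity),
    zpow_le_zpow_iff_right₀ (by norm_num : (1 : ℝ) < 2)] at hvol
  omega

lemma dyadicCube_eq_of_subset (hn : 0 < n) (h : DyadicCube n k j ⊆ DyadicCube n k' j')
    (hk : k ≤ k') : DyadicCube n k j = DyadicCube n k' j' := by
  obtain rfl : k = k' := hk.antisymm (le_of_dyadicCube_subset hn h)
  obtain ⟨x, hx⟩ := nonempty_of_measure_ne_zero (volume_dyadicCube_ne_zero (k := k) (j := j))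
  congr
  funext i
  rw [← mem_dyadicCube_iff.1 hx i, mem_dyadicCube_iff.1 (h hx) i]

lemma dyadicCube_ne_parent (hn : 0 < n) :
    DyadicCube n k j ≠ DyadicCube n (k - 1) fun i => j i / 2 := fun h =>
  (sub_one_lt k).not_ge (le_of_dyadicCube_subset hn h.symm.subset)

end Dyadic

section IsDyadic

variable {n : ℕ} {S S' : Set (En n)}

lemma IsDyadic.measurableSet (hS : IsDyadic n S) : MeasurableSet S := by
  obtain ⟨k, j, rfl⟩ := hS
  exact measurableSet_cube _ _

lemma IsDyadic.volume_ne_zero (hS : IsDyadic n S) : volume S ≠ 0 := by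
  obtain ⟨k, j, rfl⟩ := hS
  exact volume_dyadicCube_ne_zero

lemma IsDyadic.volume_ne_top (hS : IsDyadic n S) : volume S ≠ ⊤ := by
  obtain ⟨k, j, rfl⟩ := hS
  exact volume_dyadicCube_ne_top

lemma IsDyadic.subset_or_subset (hS : IsDyadic n S) (hS' : IsDyadic n S') {x : En n}
    (hx : x ∈ S) (hx' : x ∈ S') : S ⊆ S' ∨ S' ⊆ S := by
  obtain ⟨k, j, rfl⟩ := hS
  obtain ⟨k', j', rfl⟩ := hS'
  rcases le_total k' k with hk | hk
  · exact .inl (dyadicCube_subset_of_le hk hx hx')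
  · exact .inr (dyadicCube_subset_of_le hk hx' hx)

lemma countable_setOf_isDyadic : {S | IsDyadic n S}.Countable := by
  convert countable_range fun d : ℤ × (Fin n → ℤ) => DyadicCube n d.1 d.2
  ext S
  simp [IsDyadic, eq_comm]

end IsDyadic

section Average

variable {m n : ℕ} {α : ℝ} {f : Fin m → En n → ℝ} {t : ℝ≥0∞} {S Q : Set (En n)}

lemma volume_pow_mul_dyadAvg (hm : m ≠ 0) (h0 : volume S ≠ 0) (htop : volume S ≠ ⊤) :
    volume S ^ m * dyadAvg m n α f S =
      volume S ^ (α / n) * ∏ i, ∫⁻ y in S, (‖f i y‖₊ : ℝ≥0∞) := by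
  have hexp : (m : ℝ) + (α / (m * n) - 1) * m = α / n := by
    rw [sub_one_mul, mul_comm, ← mul_div_assoc, mul_div_mul_left _ _ (Nat.cast_ne_zero.2 hm)]
    ring
  rw [dyadAvg, Finset.prod_mul_distrib, Finset.prod_const, Finset.card_univ, Fintype.card_fin,
    ← ENNReal.rpow_mul_natCast, ← mul_assoc, ← ENNReal.rpow_natCast,
    ← ENNReal.rpow_add _ _ h0 htop, hexp]

lemma dyadAvg_le_of_subset (hα : 0 ≤ α) {S' : Set (En n)} (hSS' : S ⊆ S')
    (hvol : volume S' = 2 ^ n * volume S) (htop : volume S ≠ ⊤) :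
    dyadAvg m n α f S ≤ 2 ^ (m * n) * dyadAvg m n α f S' := by
  set r := α / (m * n : ℝ) - 1
  have hgrow : 1 ≤ ((2 : ℝ≥0∞) ^ n) ^ (1 + r) := by
    simpa using ENNReal.rpow_le_rpow_of_exponent_le (one_le_pow₀ one_le_two)
      (show (0 : ℝ) ≤ 1 + r by rw [_root_.add_sub_cancel]; positivity)
  have hconst : (2 : ℝ≥0∞) ^ (m * n) = ∏ _i : Fin m, (2 : ℝ≥0∞) ^ n := by
    rw [Finset.prod_const, Finset.card_univ, Fintype.card_fin, pow_mul']
  rw [dyadAvg, dyadAvg, hconst, ← Finset.prod_mul_distrib]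
  refine Finset.prod_le_prod' fun i _ => ?_
  calc volume S ^ r * ∫⁻ y in S, (‖f i y‖₊ : ℝ≥0∞)
      ≤ (((2 : ℝ≥0∞) ^ n) ^ (1 + r) * volume S ^ r) * ∫⁻ y in S', (‖f i y‖₊ : ℝ≥0∞) := by
        gcongr
        exact le_mul_of_one_le_left' hgrow
    _ = 2 ^ n * (volume S' ^ r * ∫⁻ y in S', (‖f i y‖₊ : ℝ≥0∞)) := by
        rw [hvol, ENNReal.mul_rpow_of_ne_top (pow_ne_top ENNReal.ofNat_ne_top) htop,
          ENNReal.rpow_add _ _ (by simp) (pow_ne_top ENNReal.ofNat_ne_top), ENNReal.rpow_one]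
        ring

lemma mul_volume_pow_le_of_lt_dyadAvg (hα : 0 ≤ α) (hm : m ≠ 0) (hS : IsDyadic n S)
    (hSQ : S ⊆ Q) (ht : t < dyadAvg m n α f S) :
    t * volume S ^ m ≤ volume Q ^ (α / n) * ∏ i, ∫⁻ y in S, (‖f i y‖₊ : ℝ≥0∞) :=
  calc t * volume S ^ m ≤ volume S ^ m * dyadAvg m n α f S := by
        rw [mul_comm]
        gcongr
    _ = volume S ^ (α / n) * ∏ i, ∫⁻ y in S, (‖f i y‖₊ : ℝ≥0∞) :=
        volume_pow_mul_dyadAvg hm hS.volume_ne_zero hS.volume_ne_top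
    _ ≤ _ := by gcongr

end Average

lemma tsum_pow_le_mul_prod_tsum {ι : Type*} {m : ℕ} (hm : m ≠ 0) {x : ι → ℝ≥0∞} {c : ℝ≥0∞}
    {g : Fin m → ι → ℝ≥0∞} (h : ∀ d, x d ^ m ≤ c * ∏ i, g i d) :
    (∑' d, x d) ^ m ≤ c * ∏ i, ∑' d, g i d := by
  let _ : MeasurableSpace ι := ⊤
  have hp : (0 : ℝ) ≤ (m : ℝ)⁻¹ := by positivity
  have holder : ∑' d, ∏ i, g i d ^ (m : ℝ)⁻¹ ≤ ∏ i, (∑' d, g i d) ^ (m : ℝ)⁻¹ := by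
    simpa only [lintegral_count] using ENNReal.lintegral_prod_norm_pow_le
      (μ := Measure.count) Finset.univ (fun i _ => (measurable_from_top (f := g i)).aemeasurable)
      (by simp [hm]) fun _ _ => hp
  have hroot : ∀ d, x d ≤ c ^ (m : ℝ)⁻¹ * ∏ i, g i d ^ (m : ℝ)⁻¹ := fun d => by
    rw [ENNReal.prod_rpow_of_nonneg hp, ← ENNReal.mul_rpow_of_nonneg _ _ hp,
      ← ENNReal.pow_rpow_inv_natCast hm (x d)]
    gcongr
    exact h d
  calc (∑' d, x d) ^ m ≤ (c ^ (m : ℝ)⁻¹ * ∏ i, (∑' d, g i d) ^ (m : ℝ)⁻¹) ^ m := by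
        gcongr
        calc ∑' d, x d ≤ ∑' d, c ^ (m : ℝ)⁻¹ * ∏ i, g i d ^ (m : ℝ)⁻¹ := ENNReal.tsum_le_tsum hroot
          _ = c ^ (m : ℝ)⁻¹ * ∑' d, ∏ i, g i d ^ (m : ℝ)⁻¹ := ENNReal.tsum_mul_left
          _ ≤ _ := by gcongr
    _ = c * ∏ i, ∑' d, g i d := by
        rw [ENNReal.prod_rpow_of_nonneg hp, ← ENNReal.mul_rpow_of_nonneg _ _ hp,
          ENNReal.rpow_inv_natCast_pow hm]

section CalderonZygmund

variable {m n : ℕ} {α : ℝ} {f : Fin m → En n → ℝ} {s t : ℝ≥0∞} {S Q : Set (En n)}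

lemma IsCZCube.subset_of_mem (hQ : IsCZCube m n α f t Q) (hS : IsDyadic n S) {x : En n}
    (hxS : x ∈ S) (hxQ : x ∈ Q) (ht : t < dyadAvg m n α f S) : S ⊆ Q := by
  rcases hS.subset_or_subset hQ.1 hxS hxQ with hSQ | hQS
  · exact hSQ
  · rcases hQS.eq_or_ssubset with rfl | hlt
    · exact subset_rfl
    · exact absurd ht (hQ.2.2 S hS hlt)

lemma IsCZCube.disjoint {S' : Set (En n)} (hS : IsCZCube m n α f t S)
    (hS' : IsCZCube m n α f t S') (hne : S ≠ S') : Disjoint S S' :=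
  disjoint_left.2 fun _ hx hx' =>
    hne ((hS'.subset_of_mem hS.1 hx hx' hS.2.1).antisymm (hS.subset_of_mem hS'.1 hx' hx hS'.2.1))

lemma IsCZCube.dyadAvg_le (hn : 0 < n) (hα : 0 ≤ α) (hQ : IsCZCube m n α f t Q) :
    dyadAvg m n α f Q ≤ 2 ^ (m * n) * t := by
  obtain ⟨⟨k, j, rfl⟩, -, hmax⟩ := hQ
  have hparent := hmax _ ⟨_, _, rfl⟩
    (dyadicCube_subset_parent.ssubset_of_ne (dyadicCube_ne_parent hn))
  calc dyadAvg m n α f (DyadicCube n k j)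
      ≤ 2 ^ (m * n) * dyadAvg m n α f (DyadicCube n (k - 1) fun i => j i / 2) :=
        dyadAvg_le_of_subset hα dyadicCube_subset_parent volume_dyadicCube_parent
          volume_dyadicCube_ne_top
    _ ≤ 2 ^ (m * n) * t := by gcongr; exact not_lt.1 hparent

lemma exists_isCZCube_superset (hn : 0 < n) {k : ℤ} {j : Fin n → ℤ} (hQ : IsDyadic n Q)
    (ht : t < dyadAvg m n α f (DyadicCube n k j))
    (hbdd : ∀ S', IsDyadic n S' → DyadicCube n k j ⊆ S' → t < dyadAvg m n α f S' → S' ⊆ Q) :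
    ∃ P, IsCZCube m n α f t P ∧ DyadicCube n k j ⊆ P ∧ P ⊆ Q := by
  obtain ⟨κ, jQ, rfl⟩ := hQ
  obtain ⟨k₀, ⟨j₀, hsub₀, ht₀⟩, hmin⟩ := Int.exists_least_of_bdd
    (P := fun z => ∃ j', DyadicCube n k j ⊆ DyadicCube n z j' ∧
      t < dyadAvg m n α f (DyadicCube n z j'))
    ⟨κ, fun z ⟨j', hsub, ht'⟩ => le_of_dyadicCube_subset hn (hbdd _ ⟨z, j', rfl⟩ hsub ht')⟩
    ⟨k, j, subset_rfl, ht⟩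
  refine ⟨_, ⟨⟨k₀, j₀, rfl⟩, ht₀, ?_⟩, hsub₀, hbdd _ ⟨k₀, j₀, rfl⟩ hsub₀ ht₀⟩
  rintro _ ⟨k', j', rfl⟩ hlt ht'
  exact hlt.ne (dyadicCube_eq_of_subset hn hlt.subset (hmin k' ⟨j', hsub₀.trans hlt.subset, ht'⟩))

lemma IsCZCube.levelSet_inter_subset (hn : 0 < n) (hQ : IsCZCube m n α f s Q) (hst : s ≤ t) :
    {x | t < MFracDyadic m n α f x} ∩ Q ⊆ ⋃ P ∈ {P | IsCZCube m n α f t P ∧ P ⊆ Q}, P := by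
  rintro x ⟨hx, hxQ⟩
  obtain ⟨k, j, hxS, htS⟩ : ∃ k j, x ∈ DyadicCube n k j ∧
      t < dyadAvg m n α f (DyadicCube n k j) := by
    simpa only [mem_ofPred_eq, MFracDyadic, lt_iSup_iff, exists_prop] using hx
  obtain ⟨P, hP, hSP, hPQ⟩ := exists_isCZCube_superset hn hQ.1 htS fun S' hS' hSS' htS' =>
    hQ.subset_of_mem hS' (hSS' hxS) hxQ (hst.trans_lt htS')
  exact mem_biUnion ⟨hP, hPQ⟩ (hSP hxS)

lemma IsCZCube.volume_levelSet_inter_pow_le (hm : m ≠ 0) (hn : 0 < n) (hα : 0 ≤ α)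
    (hQ : IsCZCube m n α f s Q) (hst : s ≤ t) (ht : t ≠ 0) :
    volume ({x | t < MFracDyadic m n α f x} ∩ Q) ^ m ≤
      t⁻¹ * (volume Q ^ m * dyadAvg m n α f Q) := by
  set F := {P | IsCZCube m n α f t P ∧ P ⊆ Q}
  have hFc : F.Countable := countable_setOf_isDyadic.mono fun P hP => hP.1.1
  have hFd : F.PairwiseDisjoint id := fun P hP P' hP' hne => hP.1.disjoint hP'.1 hne
  have hcube : ∀ P : F, volume (P : Set (En n)) ^ m ≤
      (t⁻¹ * volume Q ^ (α / n)) * ∏ i, ∫⁻ y in P, (‖f i y‖₊ : ℝ≥0∞) := fun ⟨P, hP, hPQ⟩ => by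
    rw [mul_assoc, ← ENNReal.mul_le_iff_le_inv ht hP.2.1.ne_top]
    exact mul_volume_pow_le_of_lt_dyadAvg hα hm hP.1 hPQ hP.2.1
  have hint : ∀ i, ∑' P : F, ∫⁻ y in P, (‖f i y‖₊ : ℝ≥0∞) ≤ ∫⁻ y in Q, (‖f i y‖₊ : ℝ≥0∞) :=
    fun i => by
      rw [← lintegral_biUnion hFc (fun P hP => hP.1.1.measurableSet) hFd]
      exact lintegral_mono_set (iUnion₂_subset fun P hP => hP.2)
  calc volume ({x | t < MFracDyadic m n α f x} ∩ Q) ^ m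
      ≤ (∑' P : F, volume (P : Set (En n))) ^ m := by
        gcongr
        exact (measure_mono (hQ.levelSet_inter_subset hn hst)).trans
          (measure_biUnion_le volume hFc id)
    _ ≤ (t⁻¹ * volume Q ^ (α / n)) * ∏ i, ∑' P : F, ∫⁻ y in P, (‖f i y‖₊ : ℝ≥0∞) :=
        tsum_pow_le_mul_prod_tsum hm hcube
    _ ≤ (t⁻¹ * volume Q ^ (α / n)) * ∏ i, ∫⁻ y in Q, (‖f i y‖₊ : ℝ≥0∞) := by
        gcongr with i
        exact hint i
    _ = t⁻¹ * (volume Q ^ m * dyadAvg m n α f Q) := by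
        rw [volume_pow_mul_dyadAvg hm hQ.1.volume_ne_zero hQ.1.volume_ne_top, mul_assoc]

end CalderonZygmund

lemma inv_zpow_succ_mul_zpow (m n : ℕ) (k : ℤ) :
    (((2 : ℝ≥0∞) ^ (m * (n + 1))) ^ (k + 1))⁻¹ * (2 ^ (m * n) * (2 ^ (m * (n + 1))) ^ k) =
      2⁻¹ ^ m := by
  set a : ℝ≥0∞ := 2 ^ (m * (n + 1))
  have ha0 : a ≠ 0 := pow_ne_zero _ two_ne_zero
  have hatop : a ≠ ⊤ := pow_ne_top ENNReal.ofNat_ne_top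
  have hsplit : a = 2 ^ (m * n) * 2 ^ m := by rw [← pow_add, ← mul_add_one]
  rw [ENNReal.zpow_add ha0 hatop, zpow_one,
    ENNReal.mul_inv (.inl (ENNReal.zpow_pos ha0 hatop k).ne')
      (.inl (ENNReal.zpow_lt_top ha0 hatop k).ne)]
  calc (a ^ k)⁻¹ * a⁻¹ * (2 ^ (m * n) * a ^ k) = a⁻¹ * 2 ^ (m * n) * ((a ^ k)⁻¹ * a ^ k) := by ring
    _ = (2 ^ m)⁻¹ * ((2 ^ (m * n))⁻¹ * 2 ^ (m * n)) := by
        rw [ENNReal.inv_mul_cancel (ENNReal.zpow_pos ha0 hatop k).ne'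
          (ENNReal.zpow_lt_top ha0 hatop k).ne, hsplit, ENNReal.mul_inv (by simp) (by simp)]
        ring
    _ = 2⁻¹ ^ m := by
        rw [ENNReal.inv_mul_cancel (by simp) (by simp), mul_one, ENNReal.inv_pow]

theorem statement_4_general (m n : ℕ) (hm : 0 < m) (hn : 0 < n) (α : ℝ) (hα0 : 0 ≤ α)
    (f : Fin m → En n → ℝ)
    (k : ℤ) (S : Set (En n))
    (hS : IsCZCube m n α f (((2:ℝ≥0∞) ^ (m * (n+1))) ^ k) S) :
    volume ({x | ((2:ℝ≥0∞) ^ (m * (n+1))) ^ (k+1) < MFracDyadic m n α f x} ∩ S) ≤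
      (1/2 : ℝ≥0∞) * volume S := by
  set a : ℝ≥0∞ := 2 ^ (m * (n + 1))
  have hlevel : a ^ k ≤ a ^ (k + 1) := ENNReal.zpow_le_of_le (one_le_pow₀ one_le_two) (by omega)
  have ht : a ^ (k + 1) ≠ 0 := (ENNReal.zpow_pos (by simp [a]) (by simp [a]) _).ne'
  rw [← ENNReal.pow_le_pow_left_iff hm.ne', mul_pow, one_div, ← inv_zpow_succ_mul_zpow m n k]
  calc _ ≤ (a ^ (k + 1))⁻¹ * (volume S ^ m * dyadAvg m n α f S) :=
        hS.volume_levelSet_inter_pow_le hm.ne' hn hα0 hlevel ht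
    _ ≤ (a ^ (k + 1))⁻¹ * (volume S ^ m * (2 ^ (m * n) * a ^ k)) := by
        gcongr
        exact hS.dyadAvg_le hn hα0
    _ = _ := by ring

/-- with `a = 2^{m(n+1)}`, the maximal dyadic cubes of the level sets
`Ω_k = {M_α^d(f⃗) > a^k}` form a sparse family: `|Ω_{k+1} ∩ Q_j^k| ≤ (1/2)|Q_j^k|`. -/
theorem statement_4 (m n : ℕ) (hm : 0 < m) (hn : 0 < n) (α : ℝ) (hα0 : 0 ≤ α)
    (hα : α < m * n) (f : Fin m → En n → ℝ)
    (hf : ∀ i, MeasureTheory.LocallyIntegrable (f i) volume)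
    (k : ℤ) (S : Set (En n))
    (hS : IsCZCube m n α f (((2:ℝ≥0∞) ^ (m * (n+1))) ^ k) S) :
    volume ({x | ((2:ℝ≥0∞) ^ (m * (n+1))) ^ (k+1) < MFracDyadic m n α f x} ∩ S) ≤
      (1/2 : ℝ≥0∞) * volume S :=
  statement_4_general m n hm hn α hα0 f k S hS
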